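/- arXiv:1905.02867 — 5 statements merged into one kernel-verified Lean document; each statement's English description precedes it below -/
import Mathlib

section
/- For every finite simple graph G, χ⃗_s(G) ≤ Δ(G), the maximum degree of G. -/
open Finset

variable {V : Type*} [Fintype V] [DecidableEq V]

/-- A weighted orientation of a simple graph `G`: each edge `uv` of `G` gets an
orientation (`dir u v = true` means the edge is directed from `u` to `v`, i.e. head `v`)
and a positive integer weight. -/
structure WOrientation (G : SimpleGraph V) where
  dir : V → V → Bool
  w : V → V → ℕ
  dir_adj : ∀ u v, dir u v = true → G.Adj u v
  dir_antisymm : ∀ u v, G.Adj u v → (dir u v = true ↔ ¬ dir v u = true)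
  w_symm : ∀ u v, w u v = w v u
  w_pos : ∀ u v, G.Adj u v → 1 ≤ w u v

/-- `S_{(D,w)}(v)`: the sum of the weights of the edges with head `v`. -/
def inSum {G : SimpleGraph V} (O : WOrientation G) (v : V) : ℕ :=
  ∑ u ∈ Finset.univ.filter (fun u => O.dir u v = true), O.w u v

/-- A weighted orientation is semi-proper if adjacent vertices get distinct
weighted in-sums. -/
def IsSemiProper {G : SimpleGraph V} (O : WOrientation G) : Prop :=
  ∀ u v, G.Adj u v → inSum O u ≠ inSum O v

/-- The maximum weighted in-sum of a weighted orientation. -/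
def maxS {G : SimpleGraph V} (O : WOrientation G) : ℕ :=
  Finset.univ.sup (inSum O)

/-- The semi-proper orientation number `χ⃗ₛ(G)`. -/
noncomputable def semiNum (G : SimpleGraph V) : ℕ :=
  sInf {k | ∃ O : WOrientation G, IsSemiProper O ∧ maxS O = k}

/-- The proper orientation number `χ⃗(G)`: all edge weights are one. -/
noncomputable def properNum (G : SimpleGraph V) : ℕ :=
  sInf {k | ∃ O : WOrientation G, IsSemiProper O ∧
    (∀ u v, G.Adj u v → O.w u v = 1) ∧ maxS O = k}

/-!
Number the vertices and direct every edge towards its later endpoint, so that each vertex `v`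
has `d⁻(v)` earlier and at most `deg v - d⁻(v)` later neighbours. Going through the vertices
from last to first, give `v` the value `0` if `d⁻(v) = 0`, and otherwise a value in
`[d⁻(v), deg v]` avoiding the values of its later neighbours: this interval has more elements
than there are later neighbours. Adjacent vertices then get distinct values (a source gets `0`,
its later neighbour at least `1`). Finally every value `S v` is realised as a weighted in-sum by
giving all in-arcs of `v` weight `1`, except one that carries the surplus `S v - d⁻(v)`.
-/

theorem Finset.exists_mem_Icc_add_card_notMem (s : Finset ℕ) (a : ℕ) :
    ∃ m ∈ Icc a (a + #s), m ∉ s :=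
  exists_mem_notMem_of_card_lt_card (by rw [Nat.card_Icc]; omega)

namespace RankOrientation

section

omit [DecidableEq V]

noncomputable def rank (v : V) : ℕ := Fintype.equivFin V v

theorem rank_lt_card (v : V) : rank v < Fintype.card V := (Fintype.equivFin V v).2

theorem rank_injective : Function.Injective (rank : V → ℕ) :=
  fun _ _ h => (Fintype.equivFin V).injective (Fin.ext h)

variable (G : SimpleGraph V) [DecidableRel G.Adj]

noncomputable def inNbrs (v : V) : Finset V := {u | G.Adj u v ∧ rank u < rank v}

noncomputable def outNbrs (v : V) : Finset V := {u | G.Adj v u ∧ rank v < rank u}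

variable {G} in
theorem mem_inNbrs {u v : V} : u ∈ inNbrs G v ↔ G.Adj u v ∧ rank u < rank v := by
  simp [inNbrs]

variable {G} in
theorem mem_outNbrs {u v : V} : u ∈ outNbrs G v ↔ G.Adj v u ∧ rank v < rank u := by
  simp [outNbrs]

theorem card_inNbrs_add_card_outNbrs_le (v : V) : #(inNbrs G v) + #(outNbrs G v) ≤ G.degree v := by
  classical
  have hdisj : Disjoint (inNbrs G v) (outNbrs G v) := by
    rw [disjoint_left]
    intro u hin hout
    rw [mem_inNbrs] at hin
    rw [mem_outNbrs] at hout
    omega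
  have hsub : inNbrs G v ∪ outNbrs G v ⊆ G.neighborFinset v := by
    intro u hu
    rw [SimpleGraph.mem_neighborFinset]
    rcases mem_union.1 hu with hin | hout
    · exact (mem_inNbrs.1 hin).1.symm
    · exact (mem_outNbrs.1 hout).1
  rw [← card_union_of_disjoint hdisj, ← SimpleGraph.card_neighborFinset_eq_degree]
  exact card_le_card hsub

noncomputable def greedyColor (v : V) : ℕ :=
  if #(inNbrs G v) = 0 then 0
  else sInf {m | #(inNbrs G v) ≤ m ∧ ∀ u ∈ outNbrs G v, greedyColor u ≠ m}
termination_by Fintype.card V - rank v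
decreasing_by
  have := (mem_outNbrs.1 ‹u ∈ outNbrs G v›).2
  have := rank_lt_card u
  omega

theorem greedyColor_eq_zero {v : V} (h : #(inNbrs G v) = 0) : greedyColor G v = 0 := by
  rw [greedyColor, if_pos h]

theorem greedyColor_spec {v : V} (h : #(inNbrs G v) ≠ 0) :
    #(inNbrs G v) ≤ greedyColor G v ∧ greedyColor G v ≤ #(inNbrs G v) + #(outNbrs G v) ∧
      ∀ u ∈ outNbrs G v, greedyColor G u ≠ greedyColor G v := by
  obtain ⟨m, hm_Icc, hm⟩ :=
    exists_mem_Icc_add_card_notMem ((outNbrs G v).image (greedyColor G)) #(inNbrs G v)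
  obtain ⟨hlo, hhi⟩ := mem_Icc.1 hm_Icc
  have hmem : m ∈ {m | #(inNbrs G v) ≤ m ∧ ∀ u ∈ outNbrs G v, greedyColor G u ≠ m} :=
    ⟨hlo, fun u hu hum => hm (mem_image.2 ⟨u, hu, hum⟩)⟩
  rw [greedyColor, if_neg h]
  obtain ⟨hinf_lo, hinf_out⟩ := Nat.sInf_mem ⟨m, hmem⟩
  refine ⟨hinf_lo, (Nat.sInf_le hmem).trans (hhi.trans ?_), hinf_out⟩
  gcongr
  exact card_image_le

theorem card_inNbrs_le_greedyColor (v : V) : #(inNbrs G v) ≤ greedyColor G v := by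
  by_cases h : #(inNbrs G v) = 0
  · omega
  · exact (greedyColor_spec G h).1

theorem greedyColor_le_degree (v : V) : greedyColor G v ≤ G.degree v := by
  by_cases h : #(inNbrs G v) = 0
  · rw [greedyColor_eq_zero G h]
    exact Nat.zero_le _
  · exact (greedyColor_spec G h).2.1.trans (card_inNbrs_add_card_outNbrs_le G v)

theorem greedyColor_ne_of_adj {u v : V} (huv : G.Adj u v) : greedyColor G u ≠ greedyColor G v := by
  suffices ∀ {u v : V}, G.Adj u v → rank u < rank v → greedyColor G u ≠ greedyColor G v by
    rcases lt_or_gt_of_ne (rank_injective.ne huv.ne) with h | h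
    · exact this huv h
    · exact (this huv.symm h).symm
  intro u v huv hlt
  have hv : #(inNbrs G v) ≠ 0 := (card_pos.2 ⟨u, mem_inNbrs.2 ⟨huv, hlt⟩⟩).ne'
  by_cases hu : #(inNbrs G u) = 0
  · have := (greedyColor_spec G hv).1
    rw [greedyColor_eq_zero G hu]
    omega
  · exact ((greedyColor_spec G hu).2.2 v (mem_outNbrs.2 ⟨huv, hlt⟩)).symm

end

variable (G : SimpleGraph V) [DecidableRel G.Adj]

noncomputable def firstIn (v : V) : V :=
  if h : (inNbrs G v).Nonempty then h.choose else v

omit [DecidableEq V] in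
theorem firstIn_mem {v : V} (h : (inNbrs G v).Nonempty) : firstIn G v ∈ inNbrs G v := by
  rw [firstIn, dif_pos h]
  exact h.choose_spec

noncomputable def arcWeight (S : V → ℕ) (u v : V) : ℕ :=
  if u = firstIn G v then S v - #(inNbrs G v) + 1 else 1

noncomputable def ofRank (S : V → ℕ) : WOrientation G where
  dir u v := decide (G.Adj u v ∧ rank u < rank v)
  w u v := if rank u < rank v then arcWeight G S u v else arcWeight G S v u
  dir_adj _ _ h := (of_decide_eq_true h).1
  dir_antisymm u v huv := by
    have := rank_injective.ne huv.ne
    simp only [decide_eq_true_eq, huv, huv.symm, true_and]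
    omega
  w_symm u v := by
    rcases lt_trichotomy (rank u) (rank v) with h | h | h
    · rw [if_pos h, if_neg (by omega)]
    · rw [rank_injective h]
    · rw [if_neg (by omega), if_pos h]
  w_pos u v _ := by
    simp only [arcWeight]
    split_ifs <;> omega

theorem inSum_ofRank (S : V → ℕ) (hS : ∀ v, #(inNbrs G v) ≤ S v)
    (hS₀ : ∀ v, #(inNbrs G v) = 0 → S v = 0) (v : V) : inSum (ofRank G S) v = S v := by
  have hheads : ({u | (ofRank G S).dir u v = true} : Finset V) = inNbrs G v := by
    ext u
    simp [ofRank, mem_inNbrs]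
  have hw : ∀ u ∈ inNbrs G v,
      (ofRank G S).w u v = (if u = firstIn G v then S v - #(inNbrs G v) else 0) + 1 := by
    intro u hu
    simp only [ofRank, if_pos (mem_inNbrs.1 hu).2, arcWeight]
    split_ifs <;> rfl
  rw [inSum, hheads, sum_congr rfl hw, sum_add_distrib, sum_ite_eq', sum_const, smul_eq_mul,
    mul_one]
  by_cases h : #(inNbrs G v) = 0
  · rw [hS₀ v h, card_eq_zero.1 h]
    rfl
  · rw [if_pos (firstIn_mem G (card_pos.1 (Nat.pos_of_ne_zero h)))]
    have := hS v
    omega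

end RankOrientation

omit [DecidableEq V] in
theorem semiNum_le_maxS {G : SimpleGraph V} (O : WOrientation G) (hO : IsSemiProper O) :
    semiNum G ≤ maxS O :=
  Nat.sInf_le ⟨O, hO, rfl⟩

/-- `χ⃗ₛ(G) ≤ Δ(G)`. -/
theorem stmt2 (G : SimpleGraph V) [DecidableRel G.Adj] :
    semiNum G ≤ G.maxDegree := by
  let c := RankOrientation.greedyColor G
  let O := RankOrientation.ofRank G c
  have hO : ∀ v, inSum O v = c v :=
    RankOrientation.inSum_ofRank G c (RankOrientation.card_inNbrs_le_greedyColor G)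
      (fun _ => RankOrientation.greedyColor_eq_zero G)
  have hproper : IsSemiProper O := fun u v huv => by
    simpa only [hO] using RankOrientation.greedyColor_ne_of_adj G huv
  calc semiNum G ≤ maxS O := semiNum_le_maxS O hproper
    _ ≤ G.maxDegree := Finset.sup_le fun v _ => (hO v).trans_le
      ((RankOrientation.greedyColor_le_degree G v).trans (G.degree_le_maxDegree v))
end

section
/- Every finite simple graph G has an optimal semi-proper orientation (D,w) in which every edge weight is 1 or 2; that is, there exists a semi-proper orientation with all weights in {1,2} whose maximum weighted in-sum equals χ⃗_s(G). -/
open Finset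

variable {V : Type*} [Fintype V] [DecidableEq V]

/-!
Forget the weights of an optimal semi-proper orientation and keep only its orientation `D` and
its in-sums `S`: the pair is admissible, i.e. `S` is proper and `indeg D v ≤ S v`. Conversely,
such a pair is realized with weights `1` and `2` as soon as `S v ≤ 2 * indeg D v` everywhere:
give weight `2` to `S v - indeg D v` of the arcs entering `v`.

If `S v > 2 * indeg D v`, either some value in `[indeg D v, S v)` is not taken by a neighbour of
`v`, and `S v` can be lowered to it, or all of these more than `indeg D v` values are taken, so
by pigeonhole one of them is `S u` for an out-neighbour `u` of `v`, and the arc `v → u` can be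
reversed. Both moves keep the pair admissible, do not increase `S`, and strictly decrease
`∑ v, 2 ^ S v * (S v + 1 - indeg D v)`, so repeating them ends at a realizable pair whose
maximum is at most the optimum.
-/

namespace SemiProper

def indeg (D : V → V → Bool) (v : V) : ℕ :=
  #{u | D u v = true}

structure IsOrientation (G : SimpleGraph V) (D : V → V → Bool) : Prop where
  adj : ∀ u v, D u v = true → G.Adj u v
  antisymm : ∀ u v, G.Adj u v → (D u v = true ↔ ¬ D v u = true)

structure IsAdmissible (G : SimpleGraph V) (D : V → V → Bool) (S : V → ℕ) : Prop
    extends IsOrientation G D where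
  proper : ∀ u v, G.Adj u v → S u ≠ S v
  indeg_le : ∀ v, indeg D v ≤ S v

def setArc (D : V → V → Bool) (u v : V) : V → V → Bool := fun x y =>
  if x = u ∧ y = v then true else if x = v ∧ y = u then false else D x y

def potential (D : V → V → Bool) (S : V → ℕ) : ℕ :=
  ∑ v, 2 ^ S v * (S v + 1 - indeg D v)

variable {G : SimpleGraph V} {D : V → V → Bool} {S : V → ℕ} {u v : V}

omit [Fintype V] [DecidableEq V] in
lemma IsOrientation.eq_false_of_eq_true (hD : IsOrientation G D) (h : D u v = true) :
    D v u = false := by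
  simpa using (hD.antisymm u v (hD.adj u v h)).1 h

omit [Fintype V] [DecidableEq V] in
lemma IsOrientation.eq_true_of_eq_false (hD : IsOrientation G D) (huv : G.Adj u v)
    (h : D u v = false) : D v u = true := by
  simpa [h] using (hD.antisymm v u huv.symm).2

omit [Fintype V] in
lemma IsOrientation.setArc (hD : IsOrientation G D) (huv : G.Adj u v) :
    IsOrientation G (setArc D u v) where
  adj x y h := by
    unfold SemiProper.setArc at h
    split_ifs at h with h₁
    · exact h₁.1 ▸ h₁.2 ▸ huv
    · exact hD.adj x y h
  antisymm x y hxy := by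
    have := hD.antisymm x y hxy
    have := G.ne_of_adj huv
    unfold SemiProper.setArc
    split_ifs <;> grind

lemma indeg_setArc_head (hne : u ≠ v) (hDuv : D u v = false) :
    indeg (setArc D u v) v = indeg D v + 1 := by
  have : univ.filter (fun x => setArc D u v x v = true) =
      insert u (univ.filter fun x => D x v = true) := by
    ext x
    by_cases hx : x = u <;> simp [setArc, hx, hne.symm]
  rw [indeg, this, card_insert_of_notMem (by simp [hDuv]), indeg]

lemma indeg_setArc_tail (hne : u ≠ v) (hDvu : D v u = true) :
    indeg (setArc D u v) u + 1 = indeg D u := by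
  have : univ.filter (fun x => setArc D u v x u = true) =
      (univ.filter fun x => D x u = true).erase v := by
    ext x
    by_cases hx : x = v <;> simp [setArc, hx, hne]
  rw [indeg, this, card_erase_add_one (by simp [hDvu]), indeg]

lemma indeg_setArc_of_ne {x : V} (hxu : x ≠ u) (hxv : x ≠ v) :
    indeg (setArc D u v) x = indeg D x := by
  unfold indeg setArc
  congr 1
  ext y
  simp [hxu, hxv]

lemma potential_update_lt {t : ℕ} (hdt : indeg D v ≤ t) (hts : t < S v) :
    potential D (Function.update S v t) < potential D S := by
  refine sum_lt_sum (fun x _ => ?_) ⟨v, mem_univ v, ?_⟩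
  · rcases eq_or_ne x v with rfl | hx
    · rw [Function.update_self]
      exact Nat.mul_le_mul (Nat.pow_le_pow_right two_pos hts.le) (by omega)
    · rw [Function.update_of_ne hx]
  · rw [Function.update_self]
    exact Nat.mul_lt_mul_of_lt_of_le (Nat.pow_lt_pow_right one_lt_two hts) (by omega)
      (by omega)

lemma potential_setArc_lt (hne : u ≠ v) (hDvu : D v u = true) (hDuv : D u v = false)
    (hu : indeg D u ≤ S u) (hv : indeg D v < S v) (hSuv : S u < S v) :
    potential (setArc D u v) S < potential D S := by
  -- turning the arc around moves a summand `2 ^ S v` off `v` and a summand `2 ^ S u` onto `u`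
  have key : ∀ x, 2 ^ S x * (S x + 1 - indeg (setArc D u v) x) + (if x = v then 2 ^ S v else 0)
      = 2 ^ S x * (S x + 1 - indeg D x) + (if x = u then 2 ^ S u else 0) := by
    intro x
    rcases eq_or_ne x v with rfl | hxv
    · rw [indeg_setArc_head hne hDuv, if_pos rfl, if_neg hne.symm, ← Nat.mul_add_one,
        add_zero]
      congr 1
      omega
    rcases eq_or_ne x u with rfl | hxu
    · have := indeg_setArc_tail hne hDvu
      rw [if_neg hxv, if_pos rfl, ← Nat.mul_add_one, add_zero]
      congr 1
      omega
    · rw [indeg_setArc_of_ne hxu hxv, if_neg hxv, if_neg hxu]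
  have hsum := congrArg (fun f : V → ℕ => ∑ x, f x) (funext key)
  simp only [sum_add_distrib, Fintype.sum_ite_eq'] at hsum
  have := Nat.pow_lt_pow_right one_lt_two hSuv
  unfold potential
  omega

lemma IsAdmissible.update (hS : IsAdmissible G D S) {t : ℕ} (hdt : indeg D v ≤ t)
    (ht : ∀ u, G.Adj v u → S u ≠ t) : IsAdmissible G D (Function.update S v t) where
  toIsOrientation := hS.toIsOrientation
  proper x y hxy := by
    rcases eq_or_ne x v with rfl | hx
    · rw [Function.update_self, Function.update_of_ne (G.ne_of_adj hxy).symm]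
      exact (ht y hxy).symm
    rcases eq_or_ne y v with rfl | hy
    · rw [Function.update_self, Function.update_of_ne hx]
      exact ht x hxy.symm
    · rw [Function.update_of_ne hx, Function.update_of_ne hy]
      exact hS.proper x y hxy
  indeg_le x := by
    rcases eq_or_ne x v with rfl | hx
    · rwa [Function.update_self]
    · rw [Function.update_of_ne hx]
      exact hS.indeg_le x

lemma IsAdmissible.setArc (hS : IsAdmissible G D S) (huv : G.Adj u v) (hDuv : D u v = false)
    (hv : indeg D v < S v) : IsAdmissible G (setArc D u v) S where
  toIsOrientation := hS.toIsOrientation.setArc huv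
  proper := hS.proper
  indeg_le x := by
    have hne := G.ne_of_adj huv
    rcases eq_or_ne x v with rfl | hxv
    · rwa [indeg_setArc_head hne hDuv]
    rcases eq_or_ne x u with rfl | hxu
    · have := indeg_setArc_tail hne (hS.eq_true_of_eq_false huv hDuv)
      have := hS.indeg_le x
      omega
    · rw [indeg_setArc_of_ne hxu hxv]
      exact hS.indeg_le x

omit [DecidableEq V] in
lemma exists_adj_eq_false_of_forall_exists_adj
    (hcover : ∀ t, indeg D v ≤ t → t < S v → ∃ u, G.Adj v u ∧ S u = t)
    (hv : 2 * indeg D v < S v) : ∃ u, G.Adj v u ∧ D u v = false ∧ S u < S v := by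
  have hcard :
      #((univ.filter fun u => D u v = true).image S) < #(Ico (indeg D v) (S v)) := by
    have : #((univ.filter fun u => D u v = true).image S) ≤ indeg D v := card_image_le
    rw [Nat.card_Ico]
    omega
  obtain ⟨t, ht, hnot⟩ := exists_mem_notMem_of_card_lt_card hcard
  rw [mem_Ico] at ht
  obtain ⟨u, hvu, rfl⟩ := hcover t ht.1 ht.2
  refine ⟨u, hvu, ?_, ht.2⟩
  by_contra hDuv
  exact hnot (mem_image_of_mem S (by simpa using hDuv))

lemma IsAdmissible.exists_potential_lt (hS : IsAdmissible G D S) (hv : 2 * indeg D v < S v) :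
    ∃ D' S', IsAdmissible G D' S' ∧ S' ≤ S ∧ potential D' S' < potential D S := by
  by_cases hfree : ∃ t, indeg D v ≤ t ∧ t < S v ∧ ∀ u, G.Adj v u → S u ≠ t
  · obtain ⟨t, hdt, hts, ht⟩ := hfree
    exact ⟨D, Function.update S v t, hS.update hdt ht, update_le_self_iff.2 hts.le,
      potential_update_lt hdt hts⟩
  · push Not at hfree
    obtain ⟨u, hvu, hDuv, hSu⟩ := exists_adj_eq_false_of_forall_exists_adj
      (fun t hdt hts => by simpa [eq_comm] using hfree t hdt hts) hv
    exact ⟨SemiProper.setArc D u v, S, hS.setArc hvu.symm hDuv (by omega), le_rfl,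
      potential_setArc_lt (G.ne_of_adj hvu).symm (hS.eq_true_of_eq_false hvu.symm hDuv) hDuv
        (hS.indeg_le u) (by omega) hSu⟩

lemma IsAdmissible.exists_le_two_mul_indeg (hS : IsAdmissible G D S) :
    ∃ D' S', IsAdmissible G D' S' ∧ S' ≤ S ∧ ∀ v, S' v ≤ 2 * indeg D' v := by
  induction hn : potential D S using Nat.strong_induction_on generalizing D S with
  | _ n ih =>
  by_cases hgood : ∀ v, S v ≤ 2 * indeg D v
  · exact ⟨D, S, hS, le_rfl, hgood⟩
  push Not at hgood
  obtain ⟨v, hv⟩ := hgood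
  obtain ⟨D₁, S₁, hS₁, hle₁, hlt⟩ := hS.exists_potential_lt hv
  obtain ⟨D₂, S₂, hS₂, hle₂, hgood⟩ := ih _ (hn ▸ hlt) hS₁ rfl
  exact ⟨D₂, S₂, hS₂, hle₂.trans hle₁, hgood⟩

lemma sum_ite_mem_two_one {α : Type*} [DecidableEq α] {A F : Finset α} (hF : F ⊆ A) :
    ∑ u ∈ A, (if u ∈ F then 2 else 1) = #A + #F := by
  have : ∀ u, (if u ∈ F then 2 else 1) = 1 + if u ∈ F then 1 else 0 := fun u => by
    split_ifs <;> rfl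
  simp only [this, sum_add_distrib, sum_const, smul_eq_mul, mul_one, sum_boole,
    filter_mem_eq_inter, inter_eq_right.2 hF, Nat.cast_id]

lemma IsOrientation.exists_wOrientation (hD : IsOrientation G D)
    (hS : ∀ v, indeg D v ≤ S v ∧ S v ≤ 2 * indeg D v) :
    ∃ O : WOrientation G,
      (∀ u v, G.Adj u v → O.w u v = 1 ∨ O.w u v = 2) ∧ inSum O = S := by
  have hF : ∀ v, ∃ F ⊆ univ.filter (fun u => D u v = true), #F = S v - indeg D v :=
    fun v => exists_subset_card_eq (by have := hS v; unfold indeg at this ⊢; omega)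
  choose F hFsub hFcard using hF
  let O : WOrientation G :=
    { dir := D
      w := fun a b => if a ∈ F b ∨ b ∈ F a then 2 else 1
      dir_adj := hD.adj
      dir_antisymm := hD.antisymm
      w_symm := fun a b => if_congr or_comm rfl rfl
      w_pos := fun a b _ => by split_ifs <;> omega }
  refine ⟨O, fun a b _ => by simp only [O]; split_ifs <;> simp, funext fun v => ?_⟩
  have hw : ∀ u ∈ univ.filter (fun u => D u v = true),
      O.w u v = if u ∈ F v then 2 else 1 := by
    intro u hu
    have hvu : v ∉ F u := fun hv => by
      simpa [hD.eq_false_of_eq_true (mem_filter.1 hu).2] using hFsub u hv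
    simp only [O, hvu, or_false]
  have := hS v
  have := hFcard v
  rw [inSum, sum_congr rfl hw, sum_ite_mem_two_one (hFsub v)]
  unfold indeg at *
  omega

lemma IsAdmissible.exists_isSemiProper (hS : IsAdmissible G D S) :
    ∃ O : WOrientation G, IsSemiProper O ∧
      (∀ u v, G.Adj u v → O.w u v = 1 ∨ O.w u v = 2) ∧ ∀ v, inSum O v ≤ S v := by
  obtain ⟨D', S', hS', hle, hgood⟩ := hS.exists_le_two_mul_indeg
  obtain ⟨O, hw, hO⟩ :=
    hS'.toIsOrientation.exists_wOrientation fun v => ⟨hS'.indeg_le v, hgood v⟩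
  exact ⟨O, fun u v huv => hO ▸ hS'.proper u v huv, hw, fun v => hO ▸ hle v⟩

omit [DecidableEq V] in
lemma exists_isAdmissible (G : SimpleGraph V) : ∃ D S, IsAdmissible G D S := by
  classical
  let e := Fintype.equivFin V
  refine ⟨fun u v => decide (G.Adj u v ∧ e u < e v), fun v => Fintype.card V + e v,
    ⟨⟨fun u v h => (of_decide_eq_true h).1, fun u v huv => ?_⟩, fun u v huv h => ?_,
      fun v => ?_⟩⟩
  · have : e u ≠ e v := e.injective.ne (G.ne_of_adj huv)
    simp only [decide_eq_true_eq, huv, huv.symm, true_and]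
    omega
  · exact G.ne_of_adj huv (e.injective (Fin.ext (by simpa using h)))
  · exact (card_filter_le _ _).trans (Nat.le_add_right _ _)

omit [DecidableEq V] in
lemma isAdmissible_of_isSemiProper {O : WOrientation G} (hO : IsSemiProper O) :
    IsAdmissible G O.dir (inSum O) where
  adj := O.dir_adj
  antisymm := O.dir_antisymm
  proper := hO
  indeg_le v := by
    rw [indeg, card_eq_sum_ones]
    exact sum_le_sum fun u hu => O.w_pos u v (O.dir_adj u v (mem_filter.1 hu).2)

end SemiProper

open SemiProper in
/-- Every finite simple graph has an optimal semi-proper orientation in which every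
edge weight is 1 or 2. -/
theorem stmt3 (G : SimpleGraph V) :
    ∃ O : WOrientation G, IsSemiProper O ∧
      (∀ u v, G.Adj u v → O.w u v = 1 ∨ O.w u v = 2) ∧
      maxS O = semiNum G := by
  have hne : {k | ∃ O : WOrientation G, IsSemiProper O ∧ maxS O = k}.Nonempty := by
    obtain ⟨D, S, hS⟩ := exists_isAdmissible G
    obtain ⟨O, hO, -⟩ := hS.exists_isSemiProper
    exact ⟨_, O, hO, rfl⟩
  obtain ⟨O₀, hO₀, hmax⟩ := Nat.sInf_mem hne
  obtain ⟨O, hO, hw, hle⟩ := (isAdmissible_of_isSemiProper hO₀).exists_isSemiProper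
  refine ⟨O, hO, hw, le_antisymm ?_ (Nat.sInf_le ⟨O, hO, rfl⟩)⟩
  calc maxS O ≤ maxS O₀ := sup_mono_fun fun v _ => hle v
    _ = semiNum G := hmax
end

section
/- Every tree T has semi-proper orientation number at most 2: there exists an orientation of the edges of T and a weight function with values in {1,2} such that adjacent vertices have distinct weighted in-sums, and every weighted in-sum is at most 2. -/
open Finset

variable {V : Type*} [Fintype V] [DecidableEq V]

/-!
Root the tree at `r` and orient every edge away from `r`, giving the edge into a vertex of depth
`d` the weight `2 - d % 2`. A non-root vertex has exactly one in-edge, so its in-sum is `1` or `2`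
according to the parity of its depth, and the root has in-sum `0`. The depths of adjacent vertices
differ by exactly one, so their in-sums differ.
-/

namespace SimpleGraph

theorem Connected.exists_adj_dist_eq_add_one {V : Type*} {G : SimpleGraph V}
    (hG : G.Connected) {r v : V} (hv : v ≠ r) :
    ∃ u, G.Adj u v ∧ G.dist r v = G.dist r u + 1 := by
  obtain ⟨q, -, hq⟩ := hG.exists_path_of_dist v r
  have hq_nil : ¬q.Nil := fun h => hv h.eq
  have hsnd : G.dist r q.snd + 1 ≤ G.dist r v := by
    rw [dist_comm, dist_comm (u := r), ← hq, ← q.length_tail_add_one hq_nil]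
    exact Nat.add_le_add_right (dist_le q.tail) 1
  refine ⟨q.snd, (q.adj_snd hq_nil).symm, ?_⟩
  have := (q.adj_snd hq_nil).diff_dist_adj (u := r)
  omega

theorem IsAcyclic.eq_of_adj_dist_eq_add_one {V : Type*} {G : SimpleGraph V}
    (hG : G.IsAcyclic) {r u₁ u₂ v : V} (h₁ : G.Adj u₁ v) (hd₁ : G.dist r v = G.dist r u₁ + 1)
    (h₂ : G.Adj u₂ v) (hd₂ : G.dist r v = G.dist r u₂ + 1) : u₁ = u₂ := by
  have hreach : G.Reachable r v := Reachable.of_dist_ne_zero (by omega)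
  -- each `uᵢ` is the penultimate vertex of a shortest, hence the unique, path from `r` to `v`
  have shortest_path : ∀ u, G.Adj u v → G.dist r v = G.dist r u + 1 →
      ∃ p : G.Walk r v, p.IsPath ∧ p.penultimate = u := by
    intro u hadj hdist
    obtain ⟨p, -, hp⟩ := (hreach.trans hadj.symm.reachable).exists_path_of_dist
    refine ⟨p.concat hadj, (p.concat hadj).isPath_of_length_eq_dist ?_, p.penultimate_concat hadj⟩
    rw [Walk.length_concat, hp, hdist]
  obtain ⟨p₁, hp₁, rfl⟩ := shortest_path u₁ h₁ hd₁
  obtain ⟨p₂, hp₂, rfl⟩ := shortest_path u₂ h₂ hd₂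
  have hp : p₁ = p₂ := congrArg Subtype.val ((hG.subsingleton_path r v).elim ⟨p₁, hp₁⟩ ⟨p₂, hp₂⟩)
  rw [hp]

end SimpleGraph

section DepthOrientation

variable {T : SimpleGraph V} (hT : T.IsTree) (r : V) (c : ℕ → ℕ) (hc : ∀ n, 0 < c n)

open Classical in
/-- Edges point away from the root `r`; an edge is weighted by `c` of the depth of its head,
which is the larger of the depths of its ends. -/
noncomputable def depthOrientation : WOrientation T where
  dir u v := decide (T.Adj u v ∧ T.dist r v = T.dist r u + 1)
  w u v := c (max (T.dist r u) (T.dist r v))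
  dir_adj _ _ h := (of_decide_eq_true h).1
  dir_antisymm u v h := by
    have := hT.dist_eq_dist_add_one_of_adj r h
    simp only [h, h.symm, true_and, decide_eq_true_eq]
    omega
  w_symm _ _ := by rw [max_comm]
  w_pos _ _ _ := hc _

theorem inSum_depthOrientation (v : V) :
    inSum (depthOrientation hT r c hc) v = if v = r then 0 else c (T.dist r v) := by
  classical
  have hfilter : univ.filter (fun u => (depthOrientation hT r c hc).dir u v = true) =
      univ.filter (fun u => T.Adj u v ∧ T.dist r v = T.dist r u + 1) := by
    simp [depthOrientation]
  rw [inSum, hfilter]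
  split_ifs with hv
  · subst hv
    simp
  · obtain ⟨u, hu⟩ := hT.connected.exists_adj_dist_eq_add_one hv
    have hparent : univ.filter (fun u => T.Adj u v ∧ T.dist r v = T.dist r u + 1) = {u} :=
      eq_singleton_iff_unique_mem.mpr ⟨by simpa using hu, fun x hx => by
        simp only [mem_filter, mem_univ, true_and] at hx
        exact hT.isAcyclic.eq_of_adj_dist_eq_add_one hx.1 hx.2 hu.1 hu.2⟩
    rw [hparent, sum_singleton]
    exact congrArg c (max_eq_right (by omega))

theorem isSemiProper_depthOrientation (hc_succ : ∀ n, c (n + 1) ≠ c n) :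
    IsSemiProper (depthOrientation hT r c hc) := by
  have parent_ne : ∀ u v, T.dist r v = T.dist r u + 1 →
      inSum (depthOrientation hT r c hc) u ≠ inSum (depthOrientation hT r c hc) v := by
    intro u v huv
    have hv : v ≠ r := by
      rintro rfl
      simp at huv
    rw [inSum_depthOrientation, inSum_depthOrientation, if_neg hv, huv]
    split_ifs
    · exact (hc _).ne
    · exact (hc_succ _).symm
  intro u v h
  rcases hT.dist_eq_dist_add_one_of_adj r h with huv | hvu
  · exact (parent_ne v u huv).symm
  · exact parent_ne u v hvu

end DepthOrientation

/-- Every tree `T` satisfies `χ⃗ₛ(T) ≤ 2`: there is an orientation with weights in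
`{1,2}` in which adjacent vertices get distinct weighted in-sums, all at most `2`. -/
theorem stmt4 (T : SimpleGraph V) (hT : T.IsTree) :
    ∃ O : WOrientation T, IsSemiProper O ∧
      (∀ u v, T.Adj u v → O.w u v = 1 ∨ O.w u v = 2) ∧
      maxS O ≤ 2 := by
  obtain ⟨r⟩ := hT.connected.nonempty
  have hc : ∀ n, 0 < 2 - n % 2 := by omega
  refine ⟨depthOrientation hT r (fun n => 2 - n % 2) hc,
    isSemiProper_depthOrientation hT r _ hc (by omega), fun u v _ => ?_, Finset.sup_le fun v _ => ?_⟩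
  · change 2 - _ % 2 = 1 ∨ 2 - _ % 2 = 2
    omega
  · rw [inSum_depthOrientation]
    split_ifs <;> omega
end

section
/- Reversing all edges along a directed path from v to p in an orientation, while transferring each edge's weight one step along the path (and adjusting the first and last edge weights appropriately as in the proof of the 1-2 theorem), preserves the weighted in-sum of every vertex: if D' reverses the path P = v, z₁, …, z_l, p and w' shifts weights so that each internal path vertex receives the same total incoming weight, then S_{(D',w')}(f) = S_{(D,w)}(f) for every vertex f. -/
open Finset

variable {V : Type*} [Fintype V] [DecidableEq V]

/-!
A vertex off the path keeps its in-edges and their weights. At `v = z 0` the bad in-edge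
loses 1 and the reversed edge `z 1 → v` brings in exactly 1. At an interior vertex `z (i + 1)`
the in-edge from `z i` turns outward, and the new in-edge from `z (i + 2)` carries the old weight
of `z i → z (i + 1)`. At `p` the lost in-edge `z l → p` hands its weight to `uj'`, whose old
weight 1 goes to `uj`.
-/

section

omit [Fintype V] [DecidableEq V]

lemma WOrientation.dir_asymm {G : SimpleGraph V} (O : WOrientation G) {x y : V}
    (h : O.dir x y = true) : ¬ O.dir y x = true :=
  fun h' => (O.dir_antisymm y x (O.dir_adj x y h).symm).mp h' h

def inWeight {G : SimpleGraph V} (O : WOrientation G) (a f : V) : ℕ :=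
  if O.dir a f = true then O.w a f else 0

lemma inWeight_of_dir {G : SimpleGraph V} {O : WOrientation G} {a f : V}
    (h : O.dir a f = true) : inWeight O a f = O.w a f :=
  if_pos h

lemma inWeight_of_not_dir {G : SimpleGraph V} {O : WOrientation G} {a f : V}
    (h : ¬ O.dir a f = true) : inWeight O a f = 0 :=
  if_neg h

/-- In the paper's notation `v = z 0`, `p = z (l + 1)`, `u → v` is the bad in-edge, and
`uj → p`, `uj' → p` are the in-edges of `p` that absorb the compensation. -/
structure IsPathReversal {G : SimpleGraph V} (O O' : WOrientation G) (l : ℕ) (z : ℕ → V)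
    (u uj uj' : V) : Prop where
  z_inj : ∀ i j, i ≤ l + 1 → j ≤ l + 1 → z i = z j → i = j
  u_ne : ∀ i, i ≤ l + 1 → u ≠ z i
  uj_ne : ∀ i, i ≤ l + 1 → uj ≠ z i
  uj'_ne : ∀ i, i ≤ l + 1 → uj' ≠ z i
  uj_ne_uj' : uj ≠ uj'
  dir_path : ∀ i, i ≤ l → O.dir (z i) (z (i + 1)) = true
  dir_u : O.dir u (z 0) = true
  dir_uj : O.dir uj (z (l + 1)) = true
  w_uj : O.w uj (z (l + 1)) = 1
  dir_uj' : O.dir uj' (z (l + 1)) = true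
  w_uj' : O.w uj' (z (l + 1)) = 1
  dir'_path : ∀ i, i ≤ l → O'.dir (z (i + 1)) (z i) = true
  dir'_eq : ∀ a b : V,
    (∀ i, i ≤ l → ¬(a = z i ∧ b = z (i + 1)) ∧ ¬(a = z (i + 1) ∧ b = z i)) →
    O'.dir a b = O.dir a b
  w'_u : O'.w u (z 0) = O.w u (z 0) - 1
  w'_first : O'.w (z 1) (z 0) = 1
  w'_shift : ∀ i, i + 1 ≤ l → O'.w (z (i + 2)) (z (i + 1)) = O.w (z i) (z (i + 1))
  w'_uj : O'.w uj (z (l + 1)) = 2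
  w'_uj' : O'.w uj' (z (l + 1)) = O.w (z l) (z (l + 1))
  w'_eq : ∀ a b : V,
    s(a, b) ≠ s(u, z 0) →
    (∀ i, i ≤ l → s(a, b) ≠ s(z i, z (i + 1))) →
    s(a, b) ≠ s(uj, z (l + 1)) → s(a, b) ≠ s(uj', z (l + 1)) →
    O'.w a b = O.w a b

namespace IsPathReversal

variable {G : SimpleGraph V} {O O' : WOrientation G} {l : ℕ} {z : ℕ → V} {u uj uj' : V}

lemma dir'_eq_of_forall_ne (R : IsPathReversal O O' l z u uj uj') {a : V}
    (ha : ∀ i, i ≤ l + 1 → a ≠ z i) (b : V) : O'.dir a b = O.dir a b :=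
  R.dir'_eq a b fun i hi => ⟨fun h => ha i (by omega) h.1, fun h => ha (i + 1) (by omega) h.1⟩

lemma inWeight_eq (R : IsPathReversal O O' l z u uj uj') {a f : V}
    (hfwd : ∀ i, i ≤ l → ¬(a = z i ∧ f = z (i + 1)))
    (hbwd : ∀ i, i ≤ l → ¬(a = z (i + 1) ∧ f = z i))
    (hu : ¬(a = u ∧ f = z 0)) (huj : ¬(a = uj ∧ f = z (l + 1)))
    (huj' : ¬(a = uj' ∧ f = z (l + 1))) :
    inWeight O' a f = inWeight O a f := by
  unfold inWeight
  rw [R.dir'_eq a f fun i hi => ⟨hfwd i hi, hbwd i hi⟩]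
  split_ifs with hdir
  · refine R.w'_eq a f ?_ ?_ ?_ ?_
    -- the swapped readings of `s(u, z 0)`, `s(uj, p)`, `s(uj', p)` go against their orientation
    · intro h
      rcases Sym2.eq_iff.mp h with h | ⟨rfl, rfl⟩
      exacts [hu h, O.dir_asymm R.dir_u hdir]
    · intro i hi h
      rcases Sym2.eq_iff.mp h with h | ⟨h₁, h₂⟩
      exacts [hfwd i hi h, hbwd i hi ⟨h₁, h₂⟩]
    · intro h
      rcases Sym2.eq_iff.mp h with h | ⟨rfl, rfl⟩
      exacts [huj h, O.dir_asymm R.dir_uj hdir]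
    · intro h
      rcases Sym2.eq_iff.mp h with h | ⟨rfl, rfl⟩
      exacts [huj' h, O.dir_asymm R.dir_uj' hdir]
  · rfl

lemma inWeight_eq_of_forall_ne (R : IsPathReversal O O' l z u uj uj') {f : V}
    (hf : ∀ k, k ≤ l + 1 → f ≠ z k) (a : V) : inWeight O' a f = inWeight O a f :=
  R.inWeight_eq (fun i _ h => hf (i + 1) (by omega) h.2) (fun i _ h => hf i (by omega) h.2)
    (fun h => hf 0 (by omega) h.2) (fun h => hf _ le_rfl h.2) (fun h => hf _ le_rfl h.2)

lemma inWeight_eq_at_path (R : IsPathReversal O O' l z u uj uj') {k : ℕ} (hk : k ≤ l + 1)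
    {a : V} (hprev : ∀ i, k = i + 1 → a ≠ z i) (hnext : k ≤ l → a ≠ z (k + 1))
    (hstart : k = 0 → a ≠ u) (hend : k = l + 1 → a ≠ uj ∧ a ≠ uj') :
    inWeight O' a (z k) = inWeight O a (z k) := by
  have hidx : ∀ {j}, j ≤ l + 1 → z k = z j → k = j := fun hj h => R.z_inj _ _ hk hj h
  refine R.inWeight_eq ?_ ?_ ?_ ?_ ?_
  · rintro i hi ⟨rfl, h⟩
    exact hprev i (hidx (by omega) h) rfl
  · rintro i hi ⟨rfl, h⟩
    obtain rfl := hidx (by omega) h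
    exact hnext hi rfl
  · rintro ⟨rfl, h⟩
    exact hstart (hidx (by omega) h) rfl
  · rintro ⟨rfl, h⟩
    exact (hend (hidx le_rfl h)).1 rfl
  · rintro ⟨rfl, h⟩
    exact (hend (hidx le_rfl h)).2 rfl

end IsPathReversal

end

omit [DecidableEq V] in
lemma inSum_eq_sum_inWeight {G : SimpleGraph V} (O : WOrientation G) (f : V) :
    inSum O f = ∑ a, inWeight O a f :=
  sum_filter _ _

lemma inSum_eq_of_inWeight_eq_of_not_mem {G H : SimpleGraph V} {O : WOrientation G}
    {O' : WOrientation H} {f : V} (t : Finset V)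
    (hout : ∀ a ∉ t, inWeight O' a f = inWeight O a f)
    (hin : ∑ a ∈ t, inWeight O' a f = ∑ a ∈ t, inWeight O a f) :
    inSum O' f = inSum O f := by
  rw [inSum_eq_sum_inWeight, inSum_eq_sum_inWeight, ← sum_sdiff (subset_univ t),
    ← sum_sdiff (subset_univ t), hin]
  congr 1
  exact sum_congr rfl fun a ha => hout a (mem_sdiff.mp ha).2

namespace IsPathReversal

variable {G : SimpleGraph V} {O O' : WOrientation G} {l : ℕ} {z : ℕ → V} {u uj uj' : V}

lemma inSum_start (R : IsPathReversal O O' l z u uj uj') : inSum O' (z 0) = inSum O (z 0) := by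
  have hne : u ≠ z 1 := R.u_ne 1 (by omega)
  refine inSum_eq_of_inWeight_eq_of_not_mem {u, z 1} (fun a ha => ?_) ?_
  · simp only [mem_insert, mem_singleton, not_or] at ha
    exact R.inWeight_eq_at_path (by omega) (fun _ h => absurd h (by omega)) (fun _ => ha.2)
      (fun _ => ha.1) (fun h => absurd h (by omega))
  · rw [sum_pair hne, sum_pair hne,
      inWeight_of_dir ((R.dir'_eq_of_forall_ne R.u_ne _).trans R.dir_u),
      inWeight_of_dir (R.dir'_path 0 (by omega)), inWeight_of_dir R.dir_u,
      inWeight_of_not_dir (O.dir_asymm (R.dir_path 0 (by omega))), R.w'_u, R.w'_first]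
    have := O.w_pos u (z 0) (O.dir_adj _ _ R.dir_u)
    omega

lemma inSum_interior (R : IsPathReversal O O' l z u uj uj') {m : ℕ} (hm : m + 1 ≤ l) :
    inSum O' (z (m + 1)) = inSum O (z (m + 1)) := by
  have hne : z m ≠ z (m + 2) := fun h => absurd (R.z_inj _ _ (by omega) (by omega) h) (by omega)
  refine inSum_eq_of_inWeight_eq_of_not_mem {z m, z (m + 2)} (fun a ha => ?_) ?_
  · simp only [mem_insert, mem_singleton, not_or] at ha
    exact R.inWeight_eq_at_path (by omega) (fun i h => by cases Nat.add_right_cancel h; exact ha.1)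
      (fun _ => ha.2) (fun h => absurd h (by omega)) (fun h => absurd h (by omega))
  · rw [sum_pair hne, sum_pair hne, inWeight_of_not_dir (O'.dir_asymm (R.dir'_path m (by omega))),
      inWeight_of_dir (R.dir'_path (m + 1) hm), inWeight_of_dir (R.dir_path m (by omega)),
      inWeight_of_not_dir (O.dir_asymm (R.dir_path (m + 1) hm)), R.w'_shift m hm, zero_add,
      add_zero]

lemma inSum_end (R : IsPathReversal O O' l z u uj uj') :
    inSum O' (z (l + 1)) = inSum O (z (l + 1)) := by
  have hmem : z l ∉ ({uj, uj'} : Finset V) := by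
    simp [(R.uj_ne l (by omega)).symm, (R.uj'_ne l (by omega)).symm]
  refine inSum_eq_of_inWeight_eq_of_not_mem {z l, uj, uj'} (fun a ha => ?_) ?_
  · simp only [mem_insert, mem_singleton, not_or] at ha
    exact R.inWeight_eq_at_path le_rfl (fun i h => by cases Nat.add_right_cancel h; exact ha.1)
      (fun h => absurd h (by omega)) (fun h => absurd h (by omega)) (fun _ => ha.2)
  · rw [sum_insert hmem, sum_insert hmem, sum_pair R.uj_ne_uj', sum_pair R.uj_ne_uj',
      inWeight_of_not_dir (O'.dir_asymm (R.dir'_path l le_rfl)),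
      inWeight_of_dir ((R.dir'_eq_of_forall_ne R.uj_ne _).trans R.dir_uj),
      inWeight_of_dir ((R.dir'_eq_of_forall_ne R.uj'_ne _).trans R.dir_uj'),
      inWeight_of_dir (R.dir_path l le_rfl), inWeight_of_dir R.dir_uj, inWeight_of_dir R.dir_uj',
      R.w'_uj, R.w'_uj', R.w_uj, R.w_uj']
    ring

omit [DecidableEq V] in
lemma inSum_of_forall_ne (R : IsPathReversal O O' l z u uj uj') {f : V}
    (hf : ∀ k, k ≤ l + 1 → f ≠ z k) : inSum O' f = inSum O f := by
  simp only [inSum_eq_sum_inWeight, R.inWeight_eq_of_forall_ne hf]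

end IsPathReversal

theorem stmt12_general (G : SimpleGraph V) (O O' : WOrientation G)
    (l : ℕ) (z : ℕ → V) (u uj uj' : V)
    (hzinj : ∀ i j, i ≤ l + 1 → j ≤ l + 1 → z i = z j → i = j)
    (hu : ∀ i, i ≤ l + 1 → u ≠ z i)
    (huj : ∀ i, i ≤ l + 1 → uj ≠ z i)
    (huj' : ∀ i, i ≤ l + 1 → uj' ≠ z i)
    (hujne : uj ≠ uj')
    -- in `D` the path is directed `z 0 → z 1 → ⋯ → z (l+1)`
    (hpath : ∀ i, i ≤ l → O.dir (z i) (z (i + 1)) = true)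
    -- bad in-edge `u → v` of weight `α > 2`
    (huv : O.dir u (z 0) = true)
    -- `uj, uj'` are in-neighbors of `p = z (l+1)` of weight 1
    (hujdir : O.dir uj (z (l + 1)) = true) (hujw : O.w uj (z (l + 1)) = 1)
    (huj'dir : O.dir uj' (z (l + 1)) = true) (huj'w : O.w uj' (z (l + 1)) = 1)
    -- `D'` reverses the path and agrees with `D` elsewhere
    (hrev : ∀ i, i ≤ l → O'.dir (z (i + 1)) (z i) = true)
    (hdir_same : ∀ a b : V,
      (∀ i, i ≤ l → ¬(a = z i ∧ b = z (i + 1)) ∧ ¬(a = z (i + 1) ∧ b = z i)) →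
      O'.dir a b = O.dir a b)
    -- the new weights
    (hw1 : O'.w u (z 0) = O.w u (z 0) - 1)
    (hw2 : O'.w (z 1) (z 0) = 1)
    (hw3 : ∀ i, i + 1 ≤ l → O'.w (z (i + 2)) (z (i + 1)) = O.w (z i) (z (i + 1)))
    (hwuj : O'.w uj (z (l + 1)) = 2)
    (hwuj' : O'.w uj' (z (l + 1)) = O.w (z l) (z (l + 1)))
    -- all other edge weights are unchanged
    (hw_other : ∀ a b : V,
      s(a, b) ≠ s(u, z 0) →
      (∀ i, i ≤ l → s(a, b) ≠ s(z i, z (i + 1))) →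
      s(a, b) ≠ s(uj, z (l + 1)) → s(a, b) ≠ s(uj', z (l + 1)) →
      O'.w a b = O.w a b) :
    ∀ f : V, inSum O' f = inSum O f := by
  have R : IsPathReversal O O' l z u uj uj' := ⟨hzinj, hu, huj, huj', hujne, hpath, huv, hujdir,
    hujw, huj'dir, huj'w, hrev, hdir_same, hw1, hw2, hw3, hwuj, hwuj', hw_other⟩
  intro f
  by_cases hf : ∃ k, k ≤ l + 1 ∧ f = z k
  · obtain ⟨k, hk, rfl⟩ := hf
    rcases k with _ | m
    · exact R.inSum_start
    · obtain hm | rfl : m < l ∨ m = l := by omega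
      · exact R.inSum_interior hm
      · exact R.inSum_end
  · push Not at hf
    exact R.inSum_of_forall_ne hf

/-- Reversing a directed path `P = z 0, z 1, …, z l, z (l+1)` (from `v = z 0` to
`p = z (l+1)`) while transferring each edge's weight one step along the path, decreasing
by one the weight of a bad in-edge `u → v` of weight `α > 2`, setting the new weight of
the first reversed edge to 1, and compensating at `p` on two further weight-one in-edges
`uj → p`, `uj' → p` (whose new weights are `2` and `w(z l, p)` respectively), preserves
the weighted in-sum of every vertex. -/
theorem stmt12 (G : SimpleGraph V) (O O' : WOrientation G)
    (l : ℕ) (z : ℕ → V) (u uj uj' : V)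
    (hzinj : ∀ i j, i ≤ l + 1 → j ≤ l + 1 → z i = z j → i = j)
    (hu : ∀ i, i ≤ l + 1 → u ≠ z i)
    (huj : ∀ i, i ≤ l + 1 → uj ≠ z i)
    (huj' : ∀ i, i ≤ l + 1 → uj' ≠ z i)
    (hujne : uj ≠ uj') (hune1 : u ≠ uj) (hune2 : u ≠ uj')
    -- in `D` the path is directed `z 0 → z 1 → ⋯ → z (l+1)`
    (hpath : ∀ i, i ≤ l → O.dir (z i) (z (i + 1)) = true)
    -- bad in-edge `u → v` of weight `α > 2`
    (huv : O.dir u (z 0) = true) (hα : 2 < O.w u (z 0))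
    -- `uj, uj'` are in-neighbors of `p = z (l+1)` of weight 1
    (hujdir : O.dir uj (z (l + 1)) = true) (hujw : O.w uj (z (l + 1)) = 1)
    (huj'dir : O.dir uj' (z (l + 1)) = true) (huj'w : O.w uj' (z (l + 1)) = 1)
    -- `D'` reverses the path and agrees with `D` elsewhere
    (hrev : ∀ i, i ≤ l → O'.dir (z (i + 1)) (z i) = true)
    (hdir_same : ∀ a b : V,
      (∀ i, i ≤ l → ¬(a = z i ∧ b = z (i + 1)) ∧ ¬(a = z (i + 1) ∧ b = z i)) →
      O'.dir a b = O.dir a b)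
    -- the new weights
    (hw1 : O'.w u (z 0) = O.w u (z 0) - 1)
    (hw2 : O'.w (z 1) (z 0) = 1)
    (hw3 : ∀ i, i + 1 ≤ l → O'.w (z (i + 2)) (z (i + 1)) = O.w (z i) (z (i + 1)))
    (hwuj : O'.w uj (z (l + 1)) = 2)
    (hwuj' : O'.w uj' (z (l + 1)) = O.w (z l) (z (l + 1)))
    -- all other edge weights are unchanged
    (hw_other : ∀ a b : V,
      s(a, b) ≠ s(u, z 0) →
      (∀ i, i ≤ l → s(a, b) ≠ s(z i, z (i + 1))) →
      s(a, b) ≠ s(uj, z (l + 1)) → s(a, b) ≠ s(uj', z (l + 1)) →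
      O'.w a b = O.w a b) :
    ∀ f : V, inSum O' f = inSum O f :=
  stmt12_general G O O' l z u uj uj' hzinj hu huj huj' hujne hpath huv hujdir hujw huj'dir huj'w
    hrev hdir_same hw1 hw2 hw3 hwuj hwuj' hw_other
end

section
/- Let (D,w) be a semi-proper orientation of a graph G with all weighted in-sums at most 2, and suppose G contains an induced subgraph consisting of vertices p₁,…,p₅, x, ¬x where p₂, x, ¬x form a triangle, p₂ is adjacent to p₁ and p₃, and p₃ is adjacent to p₄ and p₅ (a tree of triangles as in the gadget T_x). If all edge weights in this gadget are 1, then {S(x), S(¬x)} = {1, 2}. -/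
open Finset

variable {V : Type*} [Fintype V] [DecidableEq V]

/-!
The in-sums of the triangle `p₂ x ¬x` are distinct values in `{0, 1, 2}`, so they add up to
`3`, which the three unit-weight triangle edges already supply: the triangle receives no arc
from outside, so `p₂ → p₁` and `p₂ → p₃`. The leaf `p₁` then has in-sum `1`, and `p₃` has
in-sum `2`: were `p₂` its only in-neighbour, then `p₃ → p₄` and `S(p₃) = 1 = S(p₄)`. Hence
`S(p₂) = 0`, leaving `{1, 2}` to `x` and `¬x`.
-/

namespace WOrientation

section

variable {V : Type*} {G : SimpleGraph V} (O : WOrientation G)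

def inWeight (u v : V) : ℕ := if O.dir u v then O.w u v else 0

theorem one_le_inWeight {u v : V} (h : O.dir u v) : 1 ≤ O.inWeight u v := by
  rw [inWeight, if_pos h]
  exact O.w_pos u v (O.dir_adj u v h)

theorem inWeight_add_inWeight {u v : V} (h : G.Adj u v) :
    O.inWeight u v + O.inWeight v u = O.w u v := by
  have hanti := O.dir_antisymm u v h
  unfold inWeight
  by_cases huv : O.dir u v = true
  · simp [huv, hanti.1 huv]
  · simp [huv, not_not.1 (mt hanti.2 huv), O.w_symm v u]

end

section

variable {V : Type*} [Fintype V] {G : SimpleGraph V} (O : WOrientation G)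

theorem inSum_eq_sum_inWeight (v : V) : inSum O v = ∑ u, O.inWeight u v :=
  Finset.sum_filter _ _

theorem sum_inWeight_le_inSum (s : Finset V) (v : V) : ∑ u ∈ s, O.inWeight u v ≤ inSum O v :=
  O.inSum_eq_sum_inWeight v ▸ Finset.sum_le_sum_of_subset (Finset.subset_univ s)

theorem inSum_eq_of_forall_dir_eq {p v : V} (hp : O.dir p v) (h : ∀ u, O.dir u v → u = p) :
    inSum O v = O.w p v := by
  have hin : Finset.univ.filter (fun u => O.dir u v = true) = {p} := by
    ext u
    simpa using ⟨h u, fun hu => hu ▸ hp⟩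
  rw [inSum, hin, Finset.sum_singleton]

variable [DecidableEq V]

theorem eq_or_eq_of_dir_into_triangle (hsp : IsSemiProper O) (hmax : ∀ u, inSum O u ≤ 2)
    {a b c u : V} (hab : G.Adj a b) (hbc : G.Adj b c) (hac : G.Adj a c)
    (hwab : O.w a b = 1) (hwbc : O.w b c = 1) (hwac : O.w a c = 1) (hu : O.dir u a) :
    u = b ∨ u = c := by
  by_contra! ⟨hub, huc⟩
  have hSa := O.sum_inWeight_le_inSum {u, b, c} a
  have hSb := O.sum_inWeight_le_inSum {a, c} b
  have hSc := O.sum_inWeight_le_inSum {a, b} c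
  rw [Finset.sum_insert (by simp [hub, huc]), Finset.sum_pair hbc.ne] at hSa
  rw [Finset.sum_pair hac.ne] at hSb
  rw [Finset.sum_pair hab.ne] at hSc
  have := O.one_le_inWeight hu
  have := O.inWeight_add_inWeight hab
  have := O.inWeight_add_inWeight hbc
  have := O.inWeight_add_inWeight hac
  have := hsp a b hab
  have := hsp b c hbc
  have := hsp a c hac
  have := hmax a
  have := hmax b
  have := hmax c
  omega

theorem two_le_inSum_of_dir_of_pendant (hsp : IsSemiProper O) {c p ℓ : V}
    (hp : O.dir p c) (hwp : O.w p c = 1) (hℓ : ∀ a, G.Adj ℓ a ↔ a = c) (hwℓ : O.w c ℓ = 1)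
    (hℓp : ℓ ≠ p) : 2 ≤ inSum O c := by
  by_cases h : ∃ u ≠ p, O.dir u c
  · obtain ⟨u, hup, hu⟩ := h
    have hS := O.sum_inWeight_le_inSum {p, u} c
    rw [Finset.sum_pair hup.symm] at hS
    have := O.one_le_inWeight hp
    have := O.one_le_inWeight hu
    omega
  · push Not at h
    have hcℓ : G.Adj c ℓ := ((hℓ c).2 rfl).symm
    have hcℓ_dir : O.dir c ℓ := (O.dir_antisymm c ℓ hcℓ).2 (h ℓ hℓp)
    have hSc : inSum O c = 1 :=
      hwp ▸ O.inSum_eq_of_forall_dir_eq hp fun u hu => by_contra fun hup => h u hup hu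
    have hSℓ : inSum O ℓ = 1 :=
      hwℓ ▸ O.inSum_eq_of_forall_dir_eq hcℓ_dir fun u hu => (hℓ u).1 (O.dir_adj u ℓ hu).symm
    exact (hsp c ℓ hcℓ (hSc.trans hSℓ.symm)).elim

end

end WOrientation

theorem stmt13_general (G : SimpleGraph V) (O : WOrientation G)
    (p₁ p₂ p₃ p₄ p₅ x nx : V)
    (hnodup : ([p₁, p₂, p₃, p₄, p₅, x, nx] : List V).Nodup)
    (hp1 : ∀ a, G.Adj p₁ a ↔ a = p₂)
    (hp2 : ∀ a, G.Adj p₂ a ↔ (a = p₁ ∨ a = p₃ ∨ a = x ∨ a = nx))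
    (hp4 : ∀ a, G.Adj p₄ a ↔ a = p₃)
    (hxnx : G.Adj x nx)
    (hsp : IsSemiProper O) (hmax : ∀ u, inSum O u ≤ 2)
    (hw : ∀ a b, G.Adj a b →
      (a ∈ ({p₁, p₂, p₃, p₄, p₅} : Set V) ∨ b ∈ ({p₁, p₂, p₃, p₄, p₅} : Set V) ∨
        (a = x ∧ b = nx) ∨ (a = nx ∧ b = x)) → O.w a b = 1) :
    ({inSum O x, inSum O nx} : Finset ℕ) = {1, 2} := by
  simp only [List.nodup_cons, List.mem_cons, List.not_mem_nil, or_false, not_or,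
    List.nodup_nil, and_true] at hnodup
  obtain ⟨⟨-, -, -, -, h1x, h1n⟩, ⟨-, h24, -, -, -⟩, ⟨-, -, h3x, h3n⟩, -, -, -⟩ := hnodup
  have a21 : G.Adj p₂ p₁ := (hp2 p₁).2 (by simp)
  have a23 : G.Adj p₂ p₃ := (hp2 p₃).2 (by simp)
  have a2x : G.Adj p₂ x := (hp2 x).2 (by simp)
  have a2n : G.Adj p₂ nx := (hp2 nx).2 (by simp)
  have hw₂ : ∀ u, G.Adj p₂ u → O.w p₂ u = 1 := fun u hu => hw _ _ hu (Or.inl (by simp))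
  have hout : ∀ u, G.Adj p₂ u → u ≠ x → u ≠ nx → O.dir p₂ u := fun u hu hux hun =>
    (O.dir_antisymm p₂ u hu).2 fun hdir =>
      (O.eq_or_eq_of_dir_into_triangle hsp hmax a2x hxnx a2n (hw₂ x a2x)
        (hw x nx hxnx (by simp)) (hw₂ nx a2n) hdir).elim hux hun
  have hS₁ : inSum O p₁ = 1 := (hw₂ p₁ a21) ▸ O.inSum_eq_of_forall_dir_eq
    (hout p₁ a21 h1x h1n) fun u hu => (hp1 u).1 (O.dir_adj u p₁ hu).symm
  have hS₃ : 2 ≤ inSum O p₃ := O.two_le_inSum_of_dir_of_pendant hsp (hout p₃ a23 h3x h3n)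
    (hw₂ p₃ a23) hp4 (hw p₃ p₄ ((hp4 p₃).2 rfl).symm (by simp)) (Ne.symm h24)
  have hS₂ : inSum O p₂ = 0 := by
    have := hsp _ _ a21
    have := hsp _ _ a23
    have := hmax p₂
    have := hmax p₃
    omega
  have := hsp _ _ a2x
  have := hsp _ _ a2n
  have := hsp _ _ hxnx
  have := hmax x
  have := hmax nx
  obtain ⟨hx, hn⟩ | ⟨hx, hn⟩ : inSum O x = 1 ∧ inSum O nx = 2 ∨ inSum O x = 2 ∧ inSum O nx = 1 := by
    omega
  · rw [hx, hn]
  · rw [hx, hn, Finset.pair_comm]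

/-- Gadget `T_x`: vertices `p₁,…,p₅, x, ¬x` where `p₂, x, ¬x` form a triangle, `p₂` is
moreover adjacent exactly to `p₁, p₃, x, ¬x`, `p₃` exactly to `p₂, p₄, p₅`, and
`p₁, p₄, p₅` are leaves. If a semi-proper orientation has all in-sums at most 2 and all
gadget edge weights equal to 1, then `{S(x), S(¬x)} = {1, 2}`. -/
theorem stmt13 (G : SimpleGraph V) (O : WOrientation G)
    (p₁ p₂ p₃ p₄ p₅ x nx : V)
    (hnodup : ([p₁, p₂, p₃, p₄, p₅, x, nx] : List V).Nodup)
    (hp1 : ∀ a, G.Adj p₁ a ↔ a = p₂)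
    (hp2 : ∀ a, G.Adj p₂ a ↔ (a = p₁ ∨ a = p₃ ∨ a = x ∨ a = nx))
    (hp3 : ∀ a, G.Adj p₃ a ↔ (a = p₂ ∨ a = p₄ ∨ a = p₅))
    (hp4 : ∀ a, G.Adj p₄ a ↔ a = p₃)
    (hp5 : ∀ a, G.Adj p₅ a ↔ a = p₃)
    (hxnx : G.Adj x nx)
    (hsp : IsSemiProper O) (hmax : ∀ u, inSum O u ≤ 2)
    (hw : ∀ a b, G.Adj a b →
      (a ∈ ({p₁, p₂, p₃, p₄, p₅} : Set V) ∨ b ∈ ({p₁, p₂, p₃, p₄, p₅} : Set V) ∨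
        (a = x ∧ b = nx) ∨ (a = nx ∧ b = x)) → O.w a b = 1) :
    ({inSum O x, inSum O nx} : Finset ℕ) = {1, 2} :=
  stmt13_general G O p₁ p₂ p₃ p₄ p₅ x nx hnodup hp1 hp2 hp4 hxnx hsp hmax hw
end
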